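/- Let v₁, …, v_{j−1}, v_{j+1}, …, v_n ∈ ℂ^k be fixed vectors (viewing a real-linear map into ℂ^k by its values on a real basis). The set Ω = {v ∈ ℂ^k : v, v₁, …, v_{j−1}, v_{j+1}, …, v_n span ℂ^k over ℂ} is either empty, all of ℂ^k, or the complement of a complex affine hyperplane (a real-codimension-2 subspace) in ℂ^k. In particular Ω is ample: the convex hull of each path-component of Ω is either empty or all of ℂ^k. -/

import Mathlib

/-!
Write `W` for the span of the fixed vectors, so that `Ω = {w | ℂ ∙ w ⊔ W = ⊤}`. If `W` is
everything, so is `Ω`; otherwise a single `w ∈ Ω` shows that `W` is a hyperplane, and then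
`Ω = Wᶜ`. A proper complex subspace has real codimension at least two, so its complement is
path-connected and ample.
-/

open Set

namespace Submodule

section DivisionRing

variable {K V : Type*} [DivisionRing K] [AddCommGroup V] [Module K V] {W : Submodule K V}

theorem isCoatom_of_span_singleton_sup_eq_top {x : V} (hW : W ≠ ⊤) (hx : K ∙ x ⊔ W = ⊤) :
    IsCoatom W := by
  have hxW : x ∉ W := fun hxW ↦ hW <| by
    rwa [sup_eq_right.mpr ((span_singleton_le_iff_mem x W).mpr hxW)] at hx
  simpa [← covBy_top_iff, hx] using covBy_span_singleton_sup (K := K) hxW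

theorem setOf_span_singleton_sup_eq_top_of_isCoatom (hW : IsCoatom W) :
    {x : V | K ∙ x ⊔ W = ⊤} = (W : Set V)ᶜ := by
  ext x
  by_cases hxW : x ∈ W
  · simpa [hxW, (span_singleton_le_iff_mem x W).mpr hxW] using hW.1
  · simpa [hxW, sup_comm] using (isCompl_span_singleton_of_isCoatom_of_notMem hW hxW).sup_eq_top

theorem finrank_eq_of_isCoatom [FiniteDimensional K V] (hW : IsCoatom W) :
    Module.finrank K W = Module.finrank K V - 1 := by
  obtain ⟨x, hxW⟩ := SetLike.exists_of_lt hW.lt_top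
  have hx : x ≠ 0 := by rintro rfl; exact hxW.2 W.zero_mem
  have := finrank_add_eq_of_isCompl (isCompl_span_singleton_of_isCoatom_of_notMem hW hxW.2)
  rw [finrank_span_singleton hx] at this
  omega

end DivisionRing

section Complex

variable {V : Type*} [AddCommGroup V] [Module ℂ V] [Module ℝ V] [IsScalarTower ℝ ℂ V]

theorem one_lt_rank_quotient_restrictScalars {W : Submodule ℂ V} (hW : W ≠ ⊤) :
    1 < Module.rank ℝ (V ⧸ W.restrictScalars ℝ) := by
  have : Nontrivial (V ⧸ W) := Submodule.Quotient.nontrivial_iff.mpr hW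
  have htower := lift_rank_mul_lift_rank ℝ ℂ (V ⧸ W)
  rw [← (Quotient.restrictScalarsEquiv ℝ W).rank_eq, Cardinal.lift_uzero, Cardinal.lift_uzero,
    Complex.rank_real_complex] at htower
  rw [← htower, Cardinal.lift_ofNat]
  have h1 : (1 : Cardinal) ≤ Module.rank ℂ (V ⧸ W) := Cardinal.one_le_iff_pos.mpr rank_pos
  exact Cardinal.one_lt_two.trans_le (le_mul_of_one_le_right zero_le h1)

variable [TopologicalSpace V] [IsTopologicalAddGroup V] [ContinuousSMul ℝ V]

theorem isPathConnected_compl_of_ne_top {W : Submodule ℂ V} (hW : W ≠ ⊤) :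
    IsPathConnected (W : Set V)ᶜ :=
  isPathConnected_compl_of_one_lt_codim (E := W.restrictScalars ℝ)
    (one_lt_rank_quotient_restrictScalars hW)

theorem ampleSet_compl_of_ne_top {W : Submodule ℂ V} (hW : W ≠ ⊤) :
    AmpleSet (W : Set V)ᶜ :=
  AmpleSet.of_one_lt_codim (E := W.restrictScalars ℝ) (one_lt_rank_quotient_restrictScalars hW)

end Complex

end Submodule

theorem IsPathConnected.convexHull_pathComponentIn_eq_univ {F : Type*} [AddCommGroup F]
    [Module ℝ F] [TopologicalSpace F] {s : Set F} {x : F}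
    (hs : IsPathConnected s) (ha : AmpleSet s) (hx : x ∈ s) :
    convexHull ℝ (pathComponentIn s x) = univ := by
  rw [pathComponentIn_subset.antisymm (hs.subset_pathComponentIn hx le_rfl)]
  exact eq_univ_of_univ_subset <|
    (ha x hx).symm.subset.trans (convexHull_mono (connectedComponentIn_subset s x))

/-- STATEMENT 10: given fixed vectors `v₁,…,v̂ⱼ,…,vₙ ∈ ℂᵏ`, the set
`Ω = {v : v together with the fixed vectors spans ℂᵏ over ℂ}` is either empty,
all of `ℂᵏ`, or the complement of a complex hyperplane (a real-codimension-2
subspace).  In particular `Ω` is ample: the convex hull of each path-component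
of `Ω` is either empty or all of `ℂᵏ`. -/
theorem stmt10 {k m : ℕ} (v : Fin m → (Fin k → ℂ)) :
    ({w : Fin k → ℂ | Submodule.span ℂ (insert w (Set.range v)) = ⊤} = ∅ ∨
     {w : Fin k → ℂ | Submodule.span ℂ (insert w (Set.range v)) = ⊤} = Set.univ ∨
     ∃ W : Submodule ℂ (Fin k → ℂ), Module.finrank ℂ W = k - 1 ∧
       {w : Fin k → ℂ | Submodule.span ℂ (insert w (Set.range v)) = ⊤}
         = (W : Set (Fin k → ℂ))ᶜ) ∧
    ∀ w ∈ {w : Fin k → ℂ | Submodule.span ℂ (insert w (Set.range v)) = ⊤},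
      convexHull ℝ
        (pathComponentIn {w : Fin k → ℂ | Submodule.span ℂ (insert w (Set.range v)) = ⊤} w)
        = Set.univ := by
  set W := Submodule.span ℂ (Set.range v)
  have hΩ : {w : Fin k → ℂ | Submodule.span ℂ (insert w (Set.range v)) = ⊤} =
      {w | ℂ ∙ w ⊔ W = ⊤} := by
    simp only [Submodule.span_insert, W]
  rw [hΩ]
  by_cases hW : W = ⊤
  · have hΩ_univ : {w : Fin k → ℂ | ℂ ∙ w ⊔ W = ⊤} = univ := by simp [hW]
    rw [hΩ_univ]
    exact ⟨Or.inr (Or.inl rfl), fun w hw ↦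
      isPathConnected_univ.convexHull_pathComponentIn_eq_univ ampleSet_univ hw⟩
  rcases eq_empty_or_nonempty {w : Fin k → ℂ | ℂ ∙ w ⊔ W = ⊤} with hΩ_empty | ⟨w₀, hw₀⟩
  · simp [hΩ_empty]
  have hW_coatom := Submodule.isCoatom_of_span_singleton_sup_eq_top hW hw₀
  rw [Submodule.setOf_span_singleton_sup_eq_top_of_isCoatom hW_coatom]
  have hW_finrank : Module.finrank ℂ W = k - 1 := by
    rw [Submodule.finrank_eq_of_isCoatom hW_coatom, Module.finrank_fin_fun]
  exact ⟨Or.inr (Or.inr ⟨W, hW_finrank, rfl⟩), fun w hw ↦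
    (Submodule.isPathConnected_compl_of_ne_top hW).convexHull_pathComponentIn_eq_univ
      (Submodule.ampleSet_compl_of_ne_top hW) hw⟩
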